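/- There exist constants c, C > 0 such that for all N ≥ 2, the sum over j ∈ {−1,0,1,2,...} of 2^{2 max(0,j)} · max_{m ∈ D_j} (μ^{N,sym}_{j,m})² is at most C (log N)/N², where D_{-1} = {0} and D_j = {0,...,2^j −1}. -/

import Mathlib

/-!
Against the Haar function `h_{j,m}`, the indicator `t ↦ 1[z < t]` pairs to minus a tent of height
`2⁻⁽ʲ⁺¹⁾` over `I_{j,m}` and `t ↦ t` pairs to `-4⁻⁽ʲ⁺¹⁾`, so
`μ_{j,m} = 4⁻⁽ʲ⁺¹⁾ - N⁻¹ ∑_{n<N} tent(z_n)`. Grouping `z_{2k} = φ(k)` with `z_{2k+1} = 1 - φ(k)`,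
the values `φ(k)` over a block of `2ʲ⁺¹` consecutive `k` form a translate of the grid `2⁻⁽ʲ⁺¹⁾ℤ`,
on which the tent and its reflection sum exactly to their mean. Hence the tent sum is
`N 4⁻⁽ʲ⁺¹⁾ + O(2⁻ʲ)` and `2²ʲ μ_{j,m}² = O(N⁻²)`; the same pairing gives `μ_{-1} = O(N⁻¹)`.
Once `2ʲ⁺¹ ≥ N`, every `z_n` is a multiple of `2⁻ʲ`, where the tents vanish, so `μ_{j,m} = 4⁻⁽ʲ⁺¹⁾`
and these levels form a geometric tail of size `O(N⁻²)`. The remaining `log₂ N` levels give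
`O(log N / N²)`.
-/

open MeasureTheory Finset

/-- Base-2 radical inverse: for `n = ∑ nᵢ 2ⁱ`, `radInv n = ∑ nᵢ 2^{-i-1}`. -/
noncomputable def radInv (n : ℕ) : ℝ :=
  ∑ i ∈ Finset.range n, if n.testBit i then (1:ℝ)/2^(i+1) else 0

/-- L∞-normalized Haar function supported on `I_{j,m} = [m/2^j, (m+1)/2^j)`. -/
noncomputable def haarFn (j m : ℕ) (t : ℝ) : ℝ :=
  if (m:ℝ)/2^j ≤ t ∧ t < (m:ℝ)/2^j + 1/2^(j+1) then 1
  else if (m:ℝ)/2^j + 1/2^(j+1) ≤ t ∧ t < ((m:ℝ)+1)/2^j then -1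
  else 0

/-- Local discrepancy of the first `N` terms of the sequence `x`. -/
noncomputable def disc (x : ℕ → ℝ) (N : ℕ) (t : ℝ) : ℝ :=
  (∑ n ∈ Finset.range N, Set.indicator (Set.Ico (0:ℝ) t) (fun _ => (1:ℝ)) (x n)) / N - t

/-- Symmetrized van der Corput sequence: `z_{2m} = φ(m)`, `z_{2m+1} = 1 - φ(m)`. -/
noncomputable def vdcSym (n : ℕ) : ℝ :=
  if n % 2 = 0 then radInv (n / 2) else 1 - radInv (n / 2)

/-- Haar coefficient `μ_{j,m}` of the local discrepancy of the first `N` terms of `x`. -/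
noncomputable def haarCoeff (x : ℕ → ℝ) (N j m : ℕ) : ℝ :=
  ∫ t in (0:ℝ)..1, disc x N t * haarFn j m t

lemma radInv_eq_sum_range {n P : ℕ} (h : n ≤ P) :
    radInv n = ∑ i ∈ range P, if n.testBit i then (1 : ℝ) / 2 ^ (i + 1) else 0 := by
  refine sum_subset (range_subset_range.2 h) fun i _ hi => ?_
  rw [Nat.testBit_lt_two_pow ((not_lt.1 (mem_range.not.1 hi)).trans_lt i.lt_two_pow_self)]
  simp

lemma radInv_two_mul_add (k b : ℕ) (hb : b < 2) : radInv (2 * k + b) = (b + radInv k) / 2 := by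
  rw [radInv_eq_sum_range (n := 2 * k + b) (P := 2 * k + 1 + 1) (by omega),
    radInv_eq_sum_range (n := k) (P := 2 * k + 1) (by omega), sum_range_succ', add_div,
    sum_div, add_comm]
  congr 1
  · interval_cases b <;> simp
  · refine sum_congr rfl fun i _ => ?_
    rw [Nat.testBit_succ, show (2 * k + b) / 2 = k by omega]
    split_ifs <;> ring

lemma radInv_two_mul (k : ℕ) : radInv (2 * k) = radInv k / 2 := by
  simpa using radInv_two_mul_add k 0 (by norm_num)

lemma radInv_two_mul_add_one (k : ℕ) : radInv (2 * k + 1) = (1 + radInv k) / 2 := by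
  simpa using radInv_two_mul_add k 1 (by norm_num)

lemma radInv_nonneg (n : ℕ) : 0 ≤ radInv n :=
  sum_nonneg fun i _ => by split_ifs <;> positivity

lemma radInv_lt_one (n : ℕ) : radInv n < 1 := by
  calc radInv n ≤ ∑ i ∈ range n, (1 / 2 : ℝ) ^ (i + 1) :=
        sum_le_sum fun i _ => by split_ifs <;> simp
    _ = 1 - (1 / 2) ^ n := by
        simp_rw [pow_succ', ← mul_sum, geom_sum_eq (by norm_num : (1 / 2 : ℝ) ≠ 1)]; ring
    _ < 1 := by linarith [pow_pos (by norm_num : (0 : ℝ) < 1 / 2) n]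

lemma sum_range_mul {M : Type*} [AddCommMonoid M] (L A : ℕ) (f : ℕ → M) :
    ∑ i ∈ range (L * A), f i = ∑ a ∈ range A, ∑ s ∈ range L, f (L * a + s) := by
  induction A with
  | zero => simp
  | succ A ih => rw [mul_add_one, sum_range_add, ih, sum_range_succ]

lemma sum_range_two_mul {M : Type*} [AddCommMonoid M] (A : ℕ) (f : ℕ → M) :
    ∑ i ∈ range (2 * A), f i = ∑ a ∈ range A, (f (2 * a) + f (2 * a + 1)) := by
  simp [sum_range_mul, sum_range_succ]

lemma radInv_two_pow_mul_add (P A s : ℕ) (hs : s < 2 ^ P) :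
    radInv (2 ^ P * A + s) = radInv s + radInv A / 2 ^ P := by
  induction P generalizing s with
  | zero => simp [Nat.lt_one_iff.1 hs, radInv]
  | succ P ih =>
    obtain ⟨k, b, hb, rfl⟩ : ∃ k b, b < 2 ∧ s = 2 * k + b :=
      ⟨s / 2, s % 2, s.mod_lt two_pos, by omega⟩
    rw [show 2 ^ (P + 1) * A + (2 * k + b) = 2 * (2 ^ P * A + k) + b by ring,
      radInv_two_mul_add _ _ hb, radInv_two_mul_add _ _ hb, ih k (by omega), pow_succ]
    ring

lemma sum_range_radInv {M : Type*} [AddCommMonoid M] (P : ℕ) (F : ℝ → M) :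
    ∑ s ∈ range (2 ^ P), F (radInv s) = ∑ t ∈ range (2 ^ P), F (t / 2 ^ P) := by
  induction P generalizing F with
  | zero => simp [radInv]
  | succ P ih =>
    rw [pow_succ', sum_range_two_mul, sum_add_distrib]
    simp only [radInv_two_mul, radInv_two_mul_add_one]
    rw [ih fun x => F (x / 2), ih fun x => F ((1 + x) / 2), two_mul, sum_range_add]
    congr 1 <;> refine sum_congr rfl fun t _ => congrArg F ?_ <;> push_cast <;> field_simp <;> ring

lemma exists_radInv_eq_div_two_pow {P k : ℕ} (hk : k < 2 ^ P) : ∃ K : ℕ, radInv k = K / 2 ^ P := by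
  induction P generalizing k with
  | zero => exact ⟨0, by simp [Nat.lt_one_iff.1 hk, radInv]⟩
  | succ P ih =>
    obtain ⟨k', b, hb, rfl⟩ : ∃ k' b, b < 2 ∧ k = 2 * k' + b :=
      ⟨k / 2, k % 2, k.mod_lt two_pos, by omega⟩
    obtain ⟨K, hK⟩ := ih (k := k') (by omega)
    refine ⟨2 ^ P * b + K, ?_⟩
    rw [radInv_two_mul_add _ _ hb, hK, pow_succ]
    push_cast
    field_simp

def hat (u : ℝ) : ℝ := max 0 (min u (2 - u))

lemma hat_nonneg (u : ℝ) : 0 ≤ hat u := le_max_left _ _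

lemma hat_le_one (u : ℝ) : hat u ≤ 1 := by
  unfold hat
  rcases le_total u 1 with h | h
  · exact max_le zero_le_one ((min_le_left _ _).trans h)
  · exact max_le zero_le_one ((min_le_right _ _).trans (by linarith))

lemma hat_eq_zero_of_le_zero {u : ℝ} (h : u ≤ 0) : hat u = 0 :=
  max_eq_left ((min_le_left _ _).trans h)

lemma hat_eq_zero_of_two_le {u : ℝ} (h : 2 ≤ u) : hat u = 0 :=
  max_eq_left ((min_le_right _ _).trans (by linarith))

lemma hat_two_mul_int (K : ℤ) : hat (2 * K) = 0 := by
  rcases le_or_gt K 0 with h | h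
  · have : (K : ℝ) ≤ 0 := by exact_mod_cast h
    exact hat_eq_zero_of_le_zero (by linarith)
  · have : (1 : ℝ) ≤ K := by exact_mod_cast h
    exact hat_eq_zero_of_two_le (by linarith)

lemma sum_range_hat {Q k : ℕ} (hk : k + 2 ≤ Q) {δ : ℝ} (h0 : 0 ≤ δ) (h1 : δ ≤ 1) :
    ∑ t ∈ range Q, hat (t + δ - k) = 1 := by
  rw [sum_eq_add_of_mem k (k + 1) (mem_range.2 (by omega)) (mem_range.2 (by omega)) (by omega)]
  · push_cast
    rw [show (k : ℝ) + δ - k = δ by ring, show (k : ℝ) + 1 + δ - k = 1 + δ by ring, hat, hat,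
      min_eq_left (by linarith), min_eq_right (by linarith), max_eq_right h0,
      max_eq_right (by linarith)]
    ring
  · intro t _ ⟨htk, htk1⟩
    rcases lt_or_gt_of_ne htk with h | h
    · have : (t : ℝ) + 1 ≤ k := by exact_mod_cast h
      exact hat_eq_zero_of_le_zero (by linarith)
    · have : (k : ℝ) + 2 ≤ t := by exact_mod_cast (show k + 2 ≤ t by omega)
      exact hat_eq_zero_of_two_le (by linarith)

/-- `tent j m z = -∫₀¹ 1[z < t] h_{j,m}(t) dt` (see `haar_pairing_indicator_Ioi`). -/
noncomputable def tent (j m : ℕ) (z : ℝ) : ℝ := hat (2 ^ (j + 1) * z - 2 * m) / 2 ^ (j + 1)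

lemma tent_nonneg (j m : ℕ) (z : ℝ) : 0 ≤ tent j m z :=
  div_nonneg (hat_nonneg _) (by positivity)

lemma tent_le (j m : ℕ) (z : ℝ) : tent j m z ≤ 1 / 2 ^ (j + 1) :=
  div_le_div_of_nonneg_right (hat_le_one _) (by positivity)

lemma tent_int_div_two_pow (j m : ℕ) (K : ℤ) : tent j m (K / 2 ^ j) = 0 := by
  rw [tent, show (2 : ℝ) ^ (j + 1) * (K / 2 ^ j) - 2 * m = 2 * ((K - m : ℤ) : ℝ) by
    push_cast; field_simp; ring, hat_two_mul_int, zero_div]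

lemma sum_range_tent {j m : ℕ} (hm : m < 2 ^ j) {δ : ℝ} (h0 : 0 ≤ δ) (h1 : δ ≤ 1) :
    ∑ t ∈ range (2 ^ (j + 1)), tent j m ((t + δ) / 2 ^ (j + 1)) = 1 / 2 ^ (j + 1) := by
  have hQ : (2 : ℝ) ^ (j + 1) ≠ 0 := by positivity
  simp only [tent, ← sum_div, mul_div_cancel₀ _ hQ]
  rw [← sum_range_hat (Q := 2 ^ (j + 1)) (k := 2 * m) (by rw [pow_succ]; omega) h0 h1]
  push_cast
  rfl

lemma sum_range_tent_one_sub {j m : ℕ} (hm : m < 2 ^ j) {δ : ℝ} (h0 : 0 ≤ δ) (h1 : δ ≤ 1) :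
    ∑ t ∈ range (2 ^ (j + 1)), tent j m (1 - (t + δ) / 2 ^ (j + 1)) = 1 / 2 ^ (j + 1) := by
  rw [← sum_range_reflect, ← sum_range_tent hm (δ := 1 - δ) (by linarith) (by linarith)]
  refine sum_congr rfl fun t ht => congrArg _ ?_
  rw [Nat.cast_sub (by have := mem_range.1 ht; omega), Nat.cast_sub Nat.one_le_two_pow]
  push_cast
  field_simp
  ring

lemma vdcSym_two_mul (k : ℕ) : vdcSym (2 * k) = radInv k := by
  simp [vdcSym]

lemma vdcSym_two_mul_add_one (k : ℕ) : vdcSym (2 * k + 1) = 1 - radInv k := by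
  simp [vdcSym, Nat.add_mod, show (2 * k + 1) / 2 = k by omega]

lemma radInv_mem_Icc (n : ℕ) : radInv n ∈ Set.Icc (0 : ℝ) 1 :=
  ⟨radInv_nonneg n, (radInv_lt_one n).le⟩

lemma vdcSym_mem_Icc (n : ℕ) : vdcSym n ∈ Set.Icc (0 : ℝ) 1 := by
  obtain ⟨k, rfl | rfl⟩ := Nat.even_or_odd' n
  · rw [vdcSym_two_mul]; exact radInv_mem_Icc k
  · rw [vdcSym_two_mul_add_one]
    exact ⟨by linarith [radInv_lt_one k], by linarith [radInv_nonneg k]⟩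

lemma sum_tent_radInv_block {j m : ℕ} (hm : m < 2 ^ j) (A : ℕ) :
    ∑ s ∈ range (2 ^ (j + 1)), (tent j m (radInv (2 ^ (j + 1) * A + s))
      + tent j m (1 - radInv (2 ^ (j + 1) * A + s))) = 1 / 2 ^ j := by
  have h0 := radInv_nonneg A
  have h1 := (radInv_lt_one A).le
  rw [sum_congr rfl fun s hs => by rw [radInv_two_pow_mul_add _ _ _ (mem_range.1 hs)],
    sum_range_radInv (j + 1) fun x => tent j m (x + radInv A / 2 ^ (j + 1))
      + tent j m (1 - (x + radInv A / 2 ^ (j + 1)))]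
  simp only [← add_div]
  rw [sum_add_distrib, sum_range_tent hm h0 h1, sum_range_tent_one_sub hm h0 h1, pow_succ]
  ring

lemma tent_vdcSym_eq_zero (j m : ℕ) {n : ℕ} (hn : n < 2 ^ (j + 1)) : tent j m (vdcSym n) = 0 := by
  obtain ⟨K, hK⟩ := exists_radInv_eq_div_two_pow (P := j) (k := n / 2)
    (by rw [pow_succ] at hn; omega)
  unfold vdcSym
  split_ifs
  · simpa [hK] using tent_int_div_two_pow j m K
  · rw [hK, show 1 - (K : ℝ) / 2 ^ j = ((2 ^ j - K : ℤ) : ℝ) / 2 ^ j by push_cast; field_simp]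
    exact tent_int_div_two_pow j m _

lemma abs_sum_range_sub_le_of_sum_block {g : ℕ → ℝ} {L : ℕ} (hL : 0 < L) {S : ℝ}
    (hg : ∀ k, 0 ≤ g k) (hS : ∀ A, ∑ s ∈ range L, g (L * A + s) = S) (M : ℕ) :
    |∑ k ∈ range M, g k - M * S / L| ≤ S := by
  obtain ⟨A, B, hB, rfl⟩ : ∃ A B, B < L ∧ M = L * A + B := ⟨M / L, M % L, M.mod_lt hL, by
    rw [Nat.div_add_mod]⟩
  have hS0 : 0 ≤ S := hS 0 ▸ sum_nonneg fun s _ => hg _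
  have hfull : ∑ k ∈ range (L * A), g k = A * S := by simp [sum_range_mul, hS]
  have hpart : ∑ s ∈ range B, g (L * A + s) ≤ S :=
    hS A ▸ sum_le_sum_of_subset_of_nonneg (range_subset_range.2 hB.le) fun _ _ _ => hg _
  have hpart0 : 0 ≤ ∑ s ∈ range B, g (L * A + s) := sum_nonneg fun _ _ => hg _
  have hL' : (0 : ℝ) < L := by exact_mod_cast hL
  have hBS : B * S / L ≤ S :=
    div_le_of_le_mul₀ hL'.le hS0 (by rw [mul_comm]; gcongr)
  have hmean : ((L * A + B : ℕ) : ℝ) * S / L = A * S + B * S / L := by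
    push_cast; field_simp
  rw [sum_range_add, hfull, hmean, abs_le]
  constructor <;> linarith [div_nonneg (mul_nonneg (Nat.cast_nonneg B) hS0) hL'.le]

lemma abs_sum_vdcSym_sub_le {f : ℝ → ℝ} {L : ℕ} (hL : 0 < L) {S b : ℝ}
    (hf : ∀ x ∈ Set.Icc (0 : ℝ) 1, f x ∈ Set.Icc 0 b)
    (hS : ∀ A, ∑ s ∈ range L, (f (radInv (L * A + s)) + f (1 - radInv (L * A + s))) = S)
    (N : ℕ) : |∑ n ∈ range N, f (vdcSym n) - N * S / (2 * L)| ≤ S + b := by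
  have hpair (k : ℕ) : f (radInv k) + f (1 - radInv k) ∈ Set.Icc 0 (2 * b) := by
    obtain ⟨hx0, hx1⟩ := radInv_mem_Icc k
    have h := hf _ ⟨hx0, hx1⟩
    have h' := hf (1 - radInv k) ⟨by linarith, by linarith⟩
    exact ⟨by linarith [h.1, h'.1], by linarith [h.2, h'.2]⟩
  have hblock := abs_sum_range_sub_le_of_sum_block hL (fun k => (hpair k).1) hS
  have hS0 : 0 ≤ S := hS 0 ▸ sum_nonneg fun s _ => (hpair _).1
  have hb0 : 0 ≤ b := (hf 0 ⟨le_rfl, zero_le_one⟩).1.trans (hf 0 ⟨le_rfl, zero_le_one⟩).2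
  have hSb : S / (2 * L) ≤ b := by
    have hL' : (0 : ℝ) < L := by exact_mod_cast hL
    rw [div_le_iff₀ (by positivity), ← hS 0]
    calc _ ≤ ∑ s ∈ range L, 2 * b := sum_le_sum fun s _ => (hpair _).2
      _ = b * (2 * L) := by rw [sum_const, card_range, nsmul_eq_mul]; ring
  obtain ⟨M, rfl | rfl⟩ := Nat.even_or_odd' N
  · rw [sum_range_two_mul]
    simp only [vdcSym_two_mul, vdcSym_two_mul_add_one]
    specialize hblock M
    rw [show ((2 * M : ℕ) : ℝ) * S / (2 * L) = M * S / L by push_cast; field_simp]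
    linarith
  · rw [sum_range_succ, sum_range_two_mul]
    simp only [vdcSym_two_mul, vdcSym_two_mul_add_one]
    specialize hblock M
    have hz := hf _ (radInv_mem_Icc M)
    rw [show ((2 * M + 1 : ℕ) : ℝ) * S / (2 * L) = M * S / L + S / (2 * L) by push_cast; field_simp]
    rw [abs_le] at hblock ⊢
    constructor <;> linarith [hz.1, hz.2, div_nonneg hS0 (by positivity : (0 : ℝ) ≤ 2 * L)]

lemma integral_indicator_Ioi_one {u v : ℝ} (huv : u ≤ v) (z : ℝ) :
    ∫ t in u..v, (Set.Ioi z).indicator 1 t = v - max u (min v z) := by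
  rw [intervalIntegral.integral_of_le huv, setIntegral_indicator measurableSet_Ioi,
    Set.Ioc_inter_Ioi]
  simp only [Pi.one_apply, setIntegral_const, smul_eq_mul, mul_one, Real.volume_real_Ioc,
    max_def, min_def]
  split_ifs <;> linarith

lemma intervalIntegral_indicator_Ico {a b p q : ℝ} (hap : a ≤ p) (hpq : p ≤ q) (hqb : q ≤ b)
    (f : ℝ → ℝ) : ∫ t in a..b, (Set.Ico p q).indicator f t = ∫ t in p..q, f t := by
  rw [intervalIntegral.integral_of_le (hap.trans (hpq.trans hqb)), ← integral_Icc_eq_integral_Ioc,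
    setIntegral_indicator measurableSet_Ico,
    Set.inter_eq_right.2 (Set.Ico_subset_Icc_self.trans (Set.Icc_subset_Icc hap hqb)),
    integral_Ico_eq_integral_Ioc, intervalIntegral.integral_of_le hpq]

lemma disc_eq_of_nonneg {x : ℕ → ℝ} (hx : ∀ n, 0 ≤ x n) (N : ℕ) :
    disc x N = fun t => (∑ n ∈ range N, (Set.Ioi (x n)).indicator 1 t) / N - t := by
  ext t
  simp [disc, Set.indicator_apply, hx]

lemma intervalIntegrable_indicator_Ioi_one (z u v : ℝ) :
    IntervalIntegrable ((Set.Ioi z).indicator (1 : ℝ → ℝ)) volume u v :=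
  intervalIntegrable_iff.2 ((intervalIntegrable_const (c := (1 : ℝ))).def'.indicator
    measurableSet_Ioi)

lemma intervalIntegrable_sum_indicator_Ioi_one (z : ℕ → ℝ) (N : ℕ) (u v : ℝ) :
    IntervalIntegrable (fun t => ∑ n ∈ range N, (Set.Ioi (z n)).indicator (1 : ℝ → ℝ) t)
      volume u v := by
  simpa only [Finset.sum_fn] using IntervalIntegrable.sum (range N) fun n _ =>
    intervalIntegrable_indicator_Ioi_one (z n) u v

lemma intervalIntegrable_disc {x : ℕ → ℝ} (hx : ∀ n, 0 ≤ x n) (N : ℕ) (u v : ℝ) :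
    IntervalIntegrable (disc x N) volume u v := by
  rw [disc_eq_of_nonneg hx]
  exact ((intervalIntegrable_sum_indicator_Ioi_one x N u v).div_const _).sub
    (continuous_id.intervalIntegrable u v)

lemma integral_disc {x : ℕ → ℝ} (hx : ∀ n, 0 ≤ x n) (N : ℕ) {u v : ℝ} (huv : u ≤ v) :
    ∫ t in u..v, disc x N t
      = (∑ n ∈ range N, (v - max u (min v (x n)))) / N - (v ^ 2 - u ^ 2) / 2 := by
  rw [disc_eq_of_nonneg hx, intervalIntegral.integral_sub, intervalIntegral.integral_div,
    intervalIntegral.integral_finsetSum fun n _ => intervalIntegrable_indicator_Ioi_one _ _ _,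
    integral_id]
  · simp only [integral_indicator_Ioi_one huv]
  · exact (intervalIntegrable_sum_indicator_Ioi_one x N u v).div_const _
  · exact continuous_id.intervalIntegrable u v

lemma haarFn_eq_indicator_sub_indicator (j m : ℕ) (t : ℝ) :
    haarFn j m t
      = (Set.Ico (2 * m / 2 ^ (j + 1) : ℝ) ((2 * m + 1) / 2 ^ (j + 1))).indicator 1 t
        - (Set.Ico ((2 * m + 1) / 2 ^ (j + 1) : ℝ) ((2 * m + 2) / 2 ^ (j + 1))).indicator 1 t := by
  have e1 : (m : ℝ) / 2 ^ j = 2 * m / 2 ^ (j + 1) := by rw [pow_succ]; field_simp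
  have e2 : 2 * (m : ℝ) / 2 ^ (j + 1) + 1 / 2 ^ (j + 1) = (2 * m + 1) / 2 ^ (j + 1) := by ring
  have e3 : ((m : ℝ) + 1) / 2 ^ j = (2 * m + 2) / 2 ^ (j + 1) := by rw [pow_succ]; field_simp
  simp only [haarFn, e1, e2, e3, Set.indicator_apply, Set.mem_Ico, Pi.one_apply]
  split_ifs <;> grind

lemma integral_mul_haarFn {f : ℝ → ℝ} (hf : IntervalIntegrable f volume 0 1) {j m : ℕ}
    (hm : m < 2 ^ j) :
    ∫ t in (0 : ℝ)..1, f t * haarFn j m t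
      = (∫ t in (2 * m : ℝ) / 2 ^ (j + 1)..(2 * m + 1 : ℝ) / 2 ^ (j + 1), f t)
        - ∫ t in (2 * m + 1 : ℝ) / 2 ^ (j + 1)..(2 * m + 2 : ℝ) / 2 ^ (j + 1), f t := by
  have hQ : (0 : ℝ) < 2 ^ (j + 1) := by positivity
  have h0 : (0 : ℝ) ≤ 2 * m / 2 ^ (j + 1) := by positivity
  have h01 : 2 * (m : ℝ) / 2 ^ (j + 1) ≤ (2 * m + 1) / 2 ^ (j + 1) := by gcongr; linarith
  have h12 : (2 * (m : ℝ) + 1) / 2 ^ (j + 1) ≤ (2 * m + 2) / 2 ^ (j + 1) := by gcongr; linarith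
  have h2 : (2 * (m : ℝ) + 2) / 2 ^ (j + 1) ≤ 1 := by
    rw [div_le_one hQ, pow_succ]
    have : (m : ℝ) + 1 ≤ 2 ^ j := by exact_mod_cast hm
    linarith
  have hint {p q : ℝ} : IntervalIntegrable ((Set.Ico p q).indicator f) volume 0 1 :=
    intervalIntegrable_iff.2 (hf.def'.indicator measurableSet_Ico)
  simp_rw [haarFn_eq_indicator_sub_indicator, mul_sub, ← Set.indicator_mul_right, Pi.one_apply,
    mul_one]
  rw [intervalIntegral.integral_sub hint hint, intervalIntegral_indicator_Ico h0 h01 (h12.trans h2),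
    intervalIntegral_indicator_Ico (h0.trans h01) h12 h2]

lemma hat_sub_eq (w k : ℝ) :
    hat (w - k) = 1 + max k (min (k + 1) w) - max (k + 1) (min (k + 2) w) := by
  simp only [hat, max_def, min_def]
  split_ifs <;> linarith

lemma max_div_min_div {Q : ℝ} (hQ : 0 < Q) (p q z : ℝ) :
    max (p / Q) (min (q / Q) z) = max p (min q (Q * z)) / Q := by
  conv_lhs => rw [← mul_div_cancel_left₀ z hQ.ne']
  rw [min_div_div_right hQ.le, max_div_div_right hQ.le]

/-- The left side is `∫₀¹ 1[z < t] h_{j,m}(t) dt`, as computed by `integral_indicator_Ioi_one`. -/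
lemma haar_pairing_indicator_Ioi (j m : ℕ) (z : ℝ) :
    ((2 * m + 1 : ℝ) / 2 ^ (j + 1)
        - max ((2 * m : ℝ) / 2 ^ (j + 1)) (min ((2 * m + 1 : ℝ) / 2 ^ (j + 1)) z))
      - ((2 * m + 2 : ℝ) / 2 ^ (j + 1)
        - max ((2 * m + 1 : ℝ) / 2 ^ (j + 1)) (min ((2 * m + 2 : ℝ) / 2 ^ (j + 1)) z))
      = -tent j m z := by
  have hQ : (0 : ℝ) < 2 ^ (j + 1) := by positivity
  rw [max_div_min_div hQ, max_div_min_div hQ, tent, hat_sub_eq]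
  ring

lemma haarCoeff_eq {x : ℕ → ℝ} (hx : ∀ n, 0 ≤ x n) (N : ℕ) {j m : ℕ} (hm : m < 2 ^ j) :
    haarCoeff x N j m = 1 / 4 ^ (j + 1) - (∑ n ∈ range N, tent j m (x n)) / N := by
  rw [haarCoeff, integral_mul_haarFn (intervalIntegrable_disc hx N 0 1) hm,
    integral_disc hx N (by gcongr; linarith), integral_disc hx N (by gcongr; linarith)]
  have hsum : (∑ n ∈ range N, ((2 * m + 1 : ℝ) / 2 ^ (j + 1)
        - max ((2 * m : ℝ) / 2 ^ (j + 1)) (min ((2 * m + 1 : ℝ) / 2 ^ (j + 1)) (x n)))) / N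
      - (∑ n ∈ range N, ((2 * m + 2 : ℝ) / 2 ^ (j + 1)
        - max ((2 * m + 1 : ℝ) / 2 ^ (j + 1)) (min ((2 * m + 2 : ℝ) / 2 ^ (j + 1)) (x n)))) / N
      = -((∑ n ∈ range N, tent j m (x n)) / N) := by
    rw [← sub_div, ← sum_sub_distrib, ← neg_div, ← sum_neg_distrib]
    simp only [haar_pairing_indicator_Ioi]
  have hsq : (((2 * m + 1 : ℝ) / 2 ^ (j + 1)) ^ 2 - ((2 * m : ℝ) / 2 ^ (j + 1)) ^ 2) / 2
      - (((2 * m + 2 : ℝ) / 2 ^ (j + 1)) ^ 2 - ((2 * m + 1 : ℝ) / 2 ^ (j + 1)) ^ 2) / 2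
      = -(1 / 4 ^ (j + 1)) := by
    rw [show (4 : ℝ) ^ (j + 1) = (2 ^ (j + 1)) ^ 2 by rw [← pow_mul, mul_comm, pow_mul]; norm_num]
    field_simp
    ring
  linarith

lemma integral_disc_zero_one {x : ℕ → ℝ} (hx : ∀ n, x n ∈ Set.Icc (0 : ℝ) 1) (N : ℕ) :
    ∫ t in (0 : ℝ)..1, disc x N t = (∑ n ∈ range N, (1 - x n)) / N - 1 / 2 := by
  rw [integral_disc (fun n => (hx n).1) N zero_le_one]
  simp [min_eq_right (hx _).2, max_eq_right (hx _).1]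

lemma abs_integral_disc_vdcSym_le {N : ℕ} (hN : 0 < N) :
    |∫ t in (0 : ℝ)..1, disc vdcSym N t| ≤ 2 / N := by
  have h := abs_sum_vdcSym_sub_le (f := fun x => 1 - x) (L := 1) one_pos (S := 1) (b := 1)
    (fun x hx => ⟨by linarith [hx.2], by linarith [hx.1]⟩) (fun A => by simp) N
  have hN' : (0 : ℝ) < N := by exact_mod_cast hN
  have hmean (T : ℝ) : T / N - 1 / 2 = (T - N * 1 / (2 * (1 : ℕ))) / N := by
    push_cast; field_simp
  rw [integral_disc_zero_one vdcSym_mem_Icc, hmean, abs_div, abs_of_pos hN']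
  gcongr
  linarith

lemma abs_haarCoeff_vdcSym_le {N : ℕ} (hN : 0 < N) {j m : ℕ} (hm : m < 2 ^ j) :
    |haarCoeff vdcSym N j m| ≤ 3 / 2 ^ (j + 1) / N := by
  have h := abs_sum_vdcSym_sub_le (f := tent j m) (L := 2 ^ (j + 1)) (by positivity)
    (S := 1 / 2 ^ j) (b := 1 / 2 ^ (j + 1)) (fun x _ => ⟨tent_nonneg j m x, tent_le j m x⟩)
    (sum_tent_radInv_block hm) N
  have hN' : (0 : ℝ) < N := by exact_mod_cast hN
  have hmean (T : ℝ) : 1 / 4 ^ (j + 1) - T / N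
      = -((T - N * (1 / 2 ^ j) / (2 * ((2 ^ (j + 1) : ℕ) : ℝ))) / N) := by
    push_cast
    rw [show (4 : ℝ) = 2 * 2 by norm_num, mul_pow, pow_succ]
    field_simp
    ring
  rw [haarCoeff_eq (fun n => (vdcSym_mem_Icc n).1) N hm, hmean, abs_neg, abs_div, abs_of_pos hN']
  gcongr
  calc _ ≤ 1 / 2 ^ j + 1 / 2 ^ (j + 1) := h
    _ = 3 / 2 ^ (j + 1) := by rw [pow_succ]; field_simp; norm_num

lemma haarCoeff_vdcSym_of_le {N j m : ℕ} (hN : N ≤ 2 ^ (j + 1)) (hm : m < 2 ^ j) :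
    haarCoeff vdcSym N j m = 1 / 4 ^ (j + 1) := by
  rw [haarCoeff_eq (fun n => (vdcSym_mem_Icc n).1) N hm,
    sum_eq_zero fun n hn => tent_vdcSym_eq_zero j m ((mem_range.1 hn).trans_le hN), zero_div,
    sub_zero]

lemma tsum_le_of_le_of_le_geometric {F : ℕ → ℝ} {a r : ℝ} (n : ℕ) (hF : ∀ j, 0 ≤ F j)
    (hr0 : 0 ≤ r) (hr1 : r < 1) (ha : ∀ j, F j ≤ a) (hr : ∀ j, n ≤ j → F j ≤ r ^ j) :
    ∑' j, F j ≤ n * a + r ^ n / (1 - r) := by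
  have hgeom : Summable fun j => r ^ j * r ^ n :=
    (summable_geometric_of_lt_one hr0 hr1).mul_right _
  have hle (j : ℕ) : F (j + n) ≤ r ^ j * r ^ n := by rw [← pow_add]; exact hr _ (by omega)
  have htail : Summable fun j => F (j + n) := hgeom.of_nonneg_of_le (fun j => hF _) hle
  rw [← ((summable_nat_add_iff n).1 htail).sum_add_tsum_nat_add n]
  gcongr
  · calc ∑ j ∈ range n, F j ≤ ∑ j ∈ range n, a := sum_le_sum fun j _ => ha j
      _ = n * a := by rw [sum_const, card_range, nsmul_eq_mul]
  · calc ∑' j, F (j + n) ≤ ∑' j, r ^ j * r ^ n := htail.tsum_le_tsum hle hgeom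
      _ = r ^ n / (1 - r) := by rw [tsum_mul_right, tsum_geometric_of_lt_one hr0 hr1]; field_simp

lemma iSup_mem_range_le {f : ℕ → ℝ} {k : ℕ} {β : ℝ} (hβ : 0 ≤ β) (h : ∀ m < k, f m ≤ β) :
    ⨆ m ∈ range k, f m ≤ β :=
  Real.iSup_le (fun m => Real.iSup_le (fun hm => h m (mem_range.1 hm)) hβ) hβ

lemma iSup_sq_haarCoeff_vdcSym_le {N : ℕ} (hN : 0 < N) (j : ℕ) :
    2 ^ (2 * j) * ⨆ m ∈ range (2 ^ j), haarCoeff vdcSym N j m ^ 2 ≤ 9 / 4 / N ^ 2 := by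
  have hN' : (0 : ℝ) < N := by exact_mod_cast hN
  calc _ ≤ (2 : ℝ) ^ (2 * j) * (3 / 2 ^ (j + 1) / N) ^ 2 := by
        gcongr
        refine iSup_mem_range_le (by positivity) fun m hm => ?_
        have h := abs_le.1 (abs_haarCoeff_vdcSym_le hN hm)
        exact sq_le_sq' h.1 h.2
    _ = 9 / 4 / N ^ 2 := by rw [pow_mul', pow_succ]; field_simp; ring

lemma iSup_sq_haarCoeff_vdcSym_le_of_le {N j : ℕ} (hN : N ≤ 2 ^ (j + 1)) :
    2 ^ (2 * j) * ⨆ m ∈ range (2 ^ j), haarCoeff vdcSym N j m ^ 2 ≤ (1 / 4) ^ j := by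
  calc _ ≤ (2 : ℝ) ^ (2 * j) * (1 / 4 ^ (j + 1)) ^ 2 := by
        gcongr
        exact iSup_mem_range_le (by positivity) fun m hm => by rw [haarCoeff_vdcSym_of_le hN hm]
    _ = 1 / (16 * 4 ^ j) := by rw [pow_mul, pow_succ]; field_simp; ring
    _ ≤ (1 / 4) ^ j := by
        rw [one_div_pow]; gcongr; linarith [pow_pos (by norm_num : (0 : ℝ) < 4) j]

lemma tsum_iSup_sq_haarCoeff_vdcSym_le {N : ℕ} (hN : 0 < N) :
    ∑' j : ℕ, 2 ^ (2 * j) * ⨆ m ∈ range (2 ^ j), haarCoeff vdcSym N j m ^ 2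
      ≤ (9 / 4 * Nat.log 2 N + 16 / 3) / N ^ 2 := by
  set n := Nat.log 2 N
  have hNn : N ≤ 2 ^ (n + 1) := (Nat.lt_pow_succ_log_self one_lt_two N).le
  have hgeom : ((1 : ℝ) / 4) ^ n ≤ 4 / N ^ 2 := by
    rw [one_div_pow, div_le_div_iff₀ (by positivity) (by positivity), one_mul]
    calc (N : ℝ) ^ 2 ≤ (2 ^ (n + 1)) ^ 2 := by gcongr; exact_mod_cast hNn
      _ = 4 * 4 ^ n := by rw [← pow_mul, mul_comm, pow_mul, pow_succ]; norm_num [mul_comm]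
  calc _ ≤ n * (9 / 4 / N ^ 2) + (1 / 4 : ℝ) ^ n / (1 - 1 / 4) :=
        tsum_le_of_le_of_le_geometric n
          (fun j => mul_nonneg (by positivity)
            (Real.iSup_nonneg fun m => Real.iSup_nonneg fun _ => sq_nonneg _))
          (by norm_num) (by norm_num) (iSup_sq_haarCoeff_vdcSym_le hN)
          fun j hj => iSup_sq_haarCoeff_vdcSym_le_of_le
            (hNn.trans (Nat.pow_le_pow_right two_pos (by omega)))
    _ ≤ n * (9 / 4 / N ^ 2) + 4 / N ^ 2 / (1 - 1 / 4) := by gcongr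
    _ = (9 / 4 * n + 16 / 3) / N ^ 2 := by ring

theorem haarCoeff_square_sum_bound :
    ∃ c > 0, ∃ C > 0, ∀ N : ℕ, 2 ≤ N →
      (∫ t in (0:ℝ)..1, disc vdcSym N t)^2
        + ∑' j : ℕ, 2^(2*j) * (⨆ m ∈ Finset.range (2^j), (haarCoeff vdcSym N j m)^2)
        ≤ C * Real.log N / N^2 := by
  refine ⟨1, one_pos, 12 / Real.log 2, by positivity, fun N hN => ?_⟩
  have hN' : (2 : ℝ) ≤ N := by exact_mod_cast hN
  have hdisc := abs_le.1 (abs_integral_disc_vdcSym_le (N := N) (by omega))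
  have hlog : (Nat.log 2 N : ℝ) ≤ Real.logb 2 N := Real.natLog_le_logb N 2
  have hlog1 : 1 ≤ Real.logb 2 N := by
    rw [Real.le_logb_iff_rpow_le one_lt_two (by positivity)]; simpa using hN'
  rw [show 12 / Real.log 2 * Real.log N / N ^ 2 = 12 * Real.logb 2 N / N ^ 2 by
    rw [Real.logb]; ring]
  calc _ ≤ (2 / (N : ℝ)) ^ 2 + (9 / 4 * Nat.log 2 N + 16 / 3) / N ^ 2 :=
        add_le_add (sq_le_sq' hdisc.1 hdisc.2) (tsum_iSup_sq_haarCoeff_vdcSym_le (by omega))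
    _ = (4 + 9 / 4 * Nat.log 2 N + 16 / 3) / N ^ 2 := by ring
    _ ≤ 12 * Real.logb 2 N / N ^ 2 := by gcongr; linarith
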